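/- arXiv:2309.02880 — 2 statements merged into one kernel-verified Lean document; each statement's English description precedes it below -/
import Mathlib

section
/- Let G be an abelian group with torsion subgroup H = {x ∈ G : nx = 0 for some integer n ≥ 1}, and let R = ⊕_{n∈G} R_n be a G-graded commutative ring. Then every idempotent element of R is contained in the subring ⊕_{h∈H} R_h. -/
/-!
Given `n` of infinite order, choose `φ : G →+ ℚ` with `φ n ≠ 0` (`ℚ` is an injective
`ℤ`-module). Regrading along `φ` gives a ring map `R → R[ℚ]`, `x ↦ ∑ x_g T^{φ g}`, from which
every component `x_g` can be read back. So it suffices that idempotents of `S[M]` are constant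
for `S` commutative and `M` with unique sums: over a domain `S[M]` is a domain, so modulo each
prime of `S` an idempotent is `0` or `1`; hence an idempotent differs from the constant given by
its augmentation by an element with nilpotent coefficients, and two idempotents differing by a
nilpotent are equal.
-/

open DirectSum AddMonoidAlgebra

namespace AddMonoidAlgebra

section CommSemiring

variable {S M : Type*} [CommSemiring S] [AddCommMonoid M]

theorem isNilpotent_of_forall_isNilpotent_coeff {x : AddMonoidAlgebra S M}
    (h : ∀ m, IsNilpotent (x.coeff m)) : IsNilpotent x := by
  rw [← sum_coeff_single x]
  refine isNilpotent_sum fun m _ => ?_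
  obtain ⟨k, hk⟩ := h m
  exact ⟨k, by rw [single_pow, hk, single_zero]⟩

theorem lift_one_mapRingHom {T : Type*} [CommSemiring T] (f : S →+* T)
    (x : AddMonoidAlgebra S M) :
    lift T T M 1 (mapRingHom M f x) = f (lift S S M 1 x) := by
  induction x using induction_linear with
  | zero => simp
  | add x y hx hy => simp [hx, hy]
  | single m r => simp

end CommSemiring

variable {S M : Type*} [CommRing S] [AddCommMonoid M]

theorem sub_algebraMap_lift_one_eq_zero_of_isIdempotentElem [IsDomain S] [UniqueSums M]
    {e : AddMonoidAlgebra S M} (he : IsIdempotentElem e) :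
    e - algebraMap S _ (lift S S M 1 e) = 0 := by
  rcases IsIdempotentElem.iff_eq_zero_or_one.1 he with rfl | rfl <;> simp [one_def]

theorem coeff_eq_zero_of_isIdempotentElem [UniqueSums M] {e : AddMonoidAlgebra S M}
    (he : IsIdempotentElem e) {m : M} (hm : m ≠ 0) : e.coeff m = 0 := by
  set r := lift S S M 1 e -- the augmentation: the sum of the coefficients of `e`
  have hr : IsIdempotentElem (algebraMap S (AddMonoidAlgebra S M) r) := (he.map _).map _
  have hnil : IsNilpotent (e - algebraMap S _ r) := by
    refine isNilpotent_of_forall_isNilpotent_coeff fun m' =>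
      nilpotent_iff_mem_prime.2 fun p hp => ?_
    let π := mapRingHom M (Ideal.Quotient.mk p)
    have hπ : π (e - algebraMap S _ r) = 0 := by
      rw [map_sub, ← sub_algebraMap_lift_one_eq_zero_of_isIdempotentElem (he.map π),
        lift_one_mapRingHom]
      simp [π, r]
    rw [← Ideal.Quotient.eq_zero_iff_mem, ← coeff_mapRingHom, hπ, coeff_zero, Finsupp.coe_zero,
      Pi.zero_apply]
  rw [eq_of_isNilpotent_sub_of_isIdempotentElem he hr hnil]
  simp [hm]

end AddMonoidAlgebra

namespace GradedRing

variable {ι R σ M : Type*} [DecidableEq ι] [AddMonoid ι] [Semiring R] [SetLike σ R]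
  [AddSubmonoidClass σ R] (𝒜 : ι → σ) [GradedRing 𝒜] [AddMonoid M] (φ : ι →+ M)

noncomputable def toAddMonoidAlgebra : R →+* AddMonoidAlgebra R M :=
  (DirectSum.toSemiring (fun i => (singleAddHom (φ i)).comp (AddSubmonoidClass.subtype (𝒜 i)))
    (by simpa using AddMonoidAlgebra.one_def.symm) (fun a b => by simp [single_mul_single])).comp
    (decomposeRingEquiv 𝒜).toRingHom

theorem toAddMonoidAlgebra_of_mem {x : R} {i : ι} (hx : x ∈ 𝒜 i) :
    toAddMonoidAlgebra 𝒜 φ x = single (φ i) x := by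
  have hdec : decomposeRingEquiv 𝒜 x = decompose 𝒜 x := rfl
  rw [toAddMonoidAlgebra, RingHom.comp_apply, RingEquiv.toRingHom_eq_coe, RingEquiv.coe_toRingHom,
    hdec, decompose_of_mem 𝒜 hx, toSemiring_of]
  rfl

theorem decompose_coeff_toAddMonoidAlgebra (x : R) (i : ι) :
    (decompose 𝒜 ((toAddMonoidAlgebra 𝒜 φ x).coeff (φ i)) i : R) = decompose 𝒜 x i := by
  induction x using DirectSum.Decomposition.inductionOn 𝒜 with
  | zero => simp
  | add x y hx hy => simp [hx, hy]
  | @homogeneous j a =>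
    rw [toAddMonoidAlgebra_of_mem 𝒜 φ a.2]
    obtain rfl | hji := eq_or_ne j i
    · simp
    by_cases hφ : φ j = φ i <;> simp [hφ, of_eq_of_ne _ _ _ hji.symm]

end GradedRing

theorem exists_addMonoidHom_rat_apply_ne_zero {G : Type*} [AddCommGroup G] {g : G}
    (hg : ¬IsOfFinAddOrder g) : ∃ φ : G →+ ℚ, φ g ≠ 0 := by
  obtain ⟨φ, hφ⟩ := (Module.Baer.of_divisible ℚ).extension_property_addMonoidHom
    (zmultiplesHom G g) (injective_zsmul_iff_not_isOfFinAddOrder.2 hg) (Int.castAddHom ℚ)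
  have hφg : φ g = 1 := by simpa using DFunLike.congr_fun hφ 1
  exact ⟨φ, hφg ▸ one_ne_zero⟩

/-- Every idempotent of a `G`-graded commutative ring, with `G` an abelian group, is
contained in the subring `⊕_{h ∈ H} R_h`, where `H` is the torsion subgroup of `G`: all
homogeneous components of the idempotent of degree outside `H` vanish. -/
theorem idempotent_supported_on_torsion_subgroup
    {G : Type*} [AddCommGroup G] [DecidableEq G]
    {R : Type*} [CommRing R] (𝒜 : G → AddSubgroup R) [GradedRing 𝒜]
    (e : R) (he : IsIdempotentElem e) :
    ∀ n : G, (¬ ∃ k : ℕ, 1 ≤ k ∧ k • n = 0) → (DirectSum.decompose 𝒜 e n : R) = 0 := by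
  intro n hn
  obtain ⟨φ, hφ⟩ :=
    exists_addMonoidHom_rat_apply_ne_zero (isOfFinAddOrder_iff_nsmul_eq_zero.not.2 hn)
  rw [← GradedRing.decompose_coeff_toAddMonoidAlgebra 𝒜 φ,
    coeff_eq_zero_of_isIdempotentElem (he.map (GradedRing.toAddMonoidAlgebra 𝒜 φ)) hφ,
    decompose_zero, DirectSum.zero_apply, ZeroMemClass.coe_zero]
end

section
/- Let G be a torsion-free abelian group, let R be a G-graded commutative ring, let I be a graded radical ideal of R (i.e., I is graded and equals its own radical), and let J be an arbitrary ideal of R. Then the colon ideal I :_R J = {r ∈ R : rJ ⊆ I} is a graded ideal. -/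
/-!
A graded radical ideal `I` is the intersection of the graded primes containing it, and for a
prime `P` the colon ideal `P : J` is `R` or `P` according as `J ⊆ P` or not; hence `I : J` is an
intersection of graded ideals. The description of `I` by graded primes needs the grading group
to be linearly ordered, and a torsion-free abelian group `G` can be so ordered: it embeds in its
divisible hull, a `ℚ`-vector space, which carries the lexicographic order with respect to a
well-ordered basis.
-/

open Module

theorem AddMonoidHom.exists_isOrderedCancelAddMonoid_of_injective {G H : Type*}
    [AddCommMonoid G] [AddCommMonoid H] [LinearOrder H] [IsOrderedCancelAddMonoid H]
    (f : G →+ H) (hf : Function.Injective f) :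
    ∃ _ : LinearOrder G, IsOrderedCancelAddMonoid G :=
  letI := LinearOrder.lift' f hf
  ⟨_, Function.Injective.isOrderedCancelAddMonoid f (map_add f) Iff.rfl⟩

theorem IsAddTorsionFree.exists_isOrderedCancelAddMonoid (G : Type*) [AddCommGroup G]
    [IsAddTorsionFree G] : ∃ _ : LinearOrder G, IsOrderedCancelAddMonoid G := by
  let b := Basis.ofVectorSpace ℚ (DivisibleHull G)
  let _ : LinearOrder (Basis.ofVectorSpaceIndex ℚ (DivisibleHull G)) :=
    IsWellOrder.linearOrder WellOrderingRel
  let toLexRepr : DivisibleHull G ≃+ Lex (Basis.ofVectorSpaceIndex ℚ (DivisibleHull G) →₀ ℚ) :=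
    b.repr.toAddEquiv.trans (toLexAddEquiv _)
  exact (toLexRepr.toAddMonoidHom.comp (DivisibleHull.coeAddMonoidHom G))
    |>.exists_isOrderedCancelAddMonoid_of_injective
      (toLexRepr.injective.comp DivisibleHull.coe_injective)

theorem Ideal.IsPrime.colon_eq_self {R : Type*} [CommRing R] {P : Ideal R} (hP : P.IsPrime)
    {S : Set R} (hS : ¬ S ⊆ P) : P.colon S = P := by
  refine le_antisymm (fun r hr => ?_) Ideal.le_colon
  obtain ⟨s, hsS, hsP⟩ := Set.not_subset.mp hS
  exact (hP.mem_or_mem (Submodule.mem_colon.mp hr s hsS)).resolve_right hsP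

section GradedRing

variable {ι R σ : Type*} [CommRing R] [SetLike σ R] [AddSubmonoidClass σ R]

theorem Ideal.IsHomogeneous.colon_of_isPrime [DecidableEq ι] [AddMonoid ι] {𝒜 : ι → σ}
    [GradedRing 𝒜] {P : Ideal R} (hP : P.IsHomogeneous 𝒜) (hPp : P.IsPrime) (S : Set R) :
    (P.colon S).IsHomogeneous 𝒜 := by
  by_cases hS : S ⊆ P
  · rw [(Submodule.colon_eq_top_iff_subset S).mpr hS]
    exact Ideal.IsHomogeneous.top 𝒜
  · rwa [hPp.colon_eq_self hS]

theorem Ideal.IsHomogeneous.colon_of_isRadical [AddCommMonoid ι] [LinearOrder ι]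
    [IsOrderedCancelAddMonoid ι] {𝒜 : ι → σ} [GradedRing 𝒜] {I : Ideal R}
    (hI : I.IsHomogeneous 𝒜) (hrad : I.IsRadical) (S : Set R) :
    (I.colon S).IsHomogeneous 𝒜 := by
  rw [← hrad.radical, hI.radical_eq, sInf_eq_iInf]
  simp_rw [Submodule.iInf_colon]
  exact Ideal.IsHomogeneous.iInf₂ fun P hP => hP.1.colon_of_isPrime hP.2.2 S

end GradedRing

/-- If `I` is a graded radical ideal of a `G`-graded commutative ring with `G` a torsion-free
abelian group and `J` is an arbitrary ideal, then the colon ideal `I :_R J` is graded. -/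
theorem colon_of_graded_radical_isHomogeneous
    {G : Type*} [AddCommGroup G] [DecidableEq G]
    (hG : ∀ (n : ℕ) (x : G), n ≠ 0 → n • x = 0 → x = 0)
    {R : Type*} [CommRing R] (𝒜 : G → AddSubgroup R) [GradedRing 𝒜]
    (I J : Ideal R) (hI : Ideal.IsHomogeneous 𝒜 I) (hrad : I.IsRadical) :
    Ideal.IsHomogeneous 𝒜 (I.colon J) := by
  have : IsAddTorsionFree G :=
    ⟨fun n hn a b hab => sub_eq_zero.mp (hG n _ hn (by rw [nsmul_sub, sub_eq_zero]; exact hab))⟩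
  obtain ⟨order, _⟩ := IsAddTorsionFree.exists_isOrderedCancelAddMonoid G
  -- the grading was built with the given `DecidableEq G`, the library lemmas use the order's
  obtain rfl : ‹DecidableEq G› = order.toDecidableEq := Subsingleton.elim _ _
  exact hI.colon_of_isRadical hrad J
end
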